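/- For every k ≥ 2 and every index i, the function h ↦ LN_{k+1}(h)_i − LN_k(h)_i is O(h³) as h → 0 from the right; i.e., each additional linear-neighbour iteration modifies only terms of order at least three in the step size (Appendix A, point D). -/

import Mathlib

open Finset NormedSpace Asymptotics

/-- `aCoef M Q v i = Σ_{j≠i} M_ij v_j + Q_i`. -/
noncomputable def aCoef {N : ℕ} (M : Matrix (Fin N) (Fin N) ℝ) (Q : Fin N → ℝ)
    (v : Fin N → ℝ) (i : Fin N) : ℝ :=
  (∑ j ∈ Finset.univ.erase i, M i j * v j) + Q i

/-- The constant-neighbour step `F_h`. -/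
noncomputable def cnStep {N : ℕ} (M : Matrix (Fin N) (Fin N) ℝ) (Q u0 : Fin N → ℝ)
    (h : ℝ) (v : Fin N → ℝ) : Fin N → ℝ :=
  fun i => u0 i * Real.exp (M i i * h)
    + (aCoef M Q v i / (-(M i i))) * (1 - Real.exp (M i i * h))

/-- The `k`-stage constant-neighbour approximation `CN_k(h) = F_h^[k] u⁰`. -/
noncomputable def CN {N : ℕ} (M : Matrix (Fin N) (Fin N) ℝ) (Q u0 : Fin N → ℝ)
    (k : ℕ) (h : ℝ) : Fin N → ℝ :=
  (cnStep M Q u0 h)^[k] u0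

/-- The effective slope `s_i(v) = (a_i(v) − a_i(u⁰))/h`. -/
noncomputable def sCoef {N : ℕ} (M : Matrix (Fin N) (Fin N) ℝ) (Q u0 : Fin N → ℝ)
    (h : ℝ) (v : Fin N → ℝ) (i : Fin N) : ℝ :=
  (aCoef M Q v i - aCoef M Q u0 i) / h

/-- The linear-neighbour step `G_h`, with `τ_i = −1/M_ii`. -/
noncomputable def lnStep {N : ℕ} (M : Matrix (Fin N) (Fin N) ℝ) (Q u0 : Fin N → ℝ)
    (h : ℝ) (v : Fin N → ℝ) : Fin N → ℝ :=
  fun i =>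
    u0 i * Real.exp (M i i * h)
      + (aCoef M Q u0 i * (-(M i i)⁻¹) - sCoef M Q u0 h v i * (-(M i i)⁻¹) ^ 2)
          * (1 - Real.exp (M i i * h))
      + sCoef M Q u0 h v i * (-(M i i)⁻¹) * h

/-- The `k`-stage linear-neighbour approximation `LN_k(h) = G_h^[k−1] (CN_1(h))`, `k ≥ 2`. -/
noncomputable def LN {N : ℕ} (M : Matrix (Fin N) (Fin N) ℝ) (Q u0 : Fin N → ℝ)
    (k : ℕ) (h : ℝ) : Fin N → ℝ :=
  (lnStep M Q u0 h)^[k - 1] (cnStep M Q u0 h u0)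

/-- The exact solution `u_ex(h) = e^{hM} u⁰ + ∫₀^h e^{(h−s)M} Q ds`. -/
noncomputable def uex {N : ℕ} (M : Matrix (Fin N) (Fin N) ℝ) (Q u0 : Fin N → ℝ)
    (h : ℝ) : Fin N → ℝ :=
  (exp (h • M)).mulVec u0 + ∫ s in (0:ℝ)..h, (exp ((h - s) • M)).mulVec Q

/-!
`G_h(v)_i − G_h(w)_i = (a_i(v) − a_i(w)) · φ_i(h)/h`, where `φ_i(h) = τ_i h − τ_i² (1 − e^{M_ii h})`
is the weight of the slope `s_i` in `G_h`. Its Taylor expansion gives `φ_i(h) = O(h²)`, so one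
application of `G_h` turns an `O(hⁿ)` difference of arguments into an `O(hⁿ⁺¹)` difference of values.
Since `G_h(u⁰) = CN_1(h)`, we have `LN_k(h) = G_hᵏ(u⁰)` for `k ≥ 1`, and `CN_1(h) − u⁰ = O(h)`;
hence `LN_{k+1}(h) − LN_k(h) = O(h^{k+1})`, which is `O(h³)` once `k ≥ 2`.
-/

open Filter Topology Nat

theorem Asymptotics.isBigO_pow_pow_of_le {𝕜 : Type*} [NormedDivisionRing 𝕜] {m n : ℕ}
    (hmn : m ≤ n) : (fun x : 𝕜 => x ^ n) =O[𝓝 0] fun x => x ^ m := by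
  rcases hmn.eq_or_lt with rfl | hlt
  · exact isBigO_refl _ _
  · exact (isLittleO_pow_pow hlt).isBigO

theorem Real.exp_mul_sub_sum_range_isBigO_pow (c : ℝ) (n : ℕ) :
    (fun h => Real.exp (c * h) - ∑ i ∈ range n, (c * h) ^ i / i !) =O[𝓝 0] (· ^ n) := by
  have hc : Tendsto (fun h : ℝ => c * h) (𝓝 0) (𝓝 0) := by
    simpa using (continuous_const_mul c).tendsto 0
  refine ((Real.exp_sub_sum_range_isBigO_pow n).comp_tendsto hc).trans ?_
  simpa only [Function.comp_def, mul_pow] using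
    (isBigO_refl (· ^ n) (𝓝 (0 : ℝ))).const_mul_left (c ^ n)

/-- `φ_i(h)` for `c = M_ii`, i.e. `τ_i = -c⁻¹`: the coefficient of `s_i(v)` in `G_h(v)_i`. -/
noncomputable def slopeWeight (c h : ℝ) : ℝ :=
  -c⁻¹ * h - (-c⁻¹) ^ 2 * (1 - Real.exp (c * h))

theorem slopeWeight_eq (c h : ℝ) :
    slopeWeight c h = c⁻¹ ^ 2 * (Real.exp (c * h) - 1 - c * h) := by
  rcases eq_or_ne c 0 with rfl | hc
  · simp [slopeWeight]
  · simp only [slopeWeight]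
    field_simp
    ring

theorem slopeWeight_div_isBigO (c : ℝ) :
    (fun h => slopeWeight c h / h) =O[𝓝 0] fun h => h := by
  have hweight : (fun h => slopeWeight c h) =O[𝓝 0] (· ^ 2) :=
    ((Real.exp_mul_sub_sum_range_isBigO_pow c 2).const_mul_left (c⁻¹ ^ 2)).congr_left fun h => by
      simp [slopeWeight_eq, sum_range_succ, sub_sub]
  simpa only [div_eq_mul_inv, sq, mul_self_mul_inv] using
    hweight.mul (isBigO_refl (fun h : ℝ => h⁻¹) _)

section LinearNeighbour

variable {N : ℕ} (M : Matrix (Fin N) (Fin N) ℝ) (Q u0 : Fin N → ℝ)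

theorem aCoef_sub_aCoef (v w : Fin N → ℝ) (i : Fin N) :
    aCoef M Q v i - aCoef M Q w i = ∑ j ∈ univ.erase i, M i j * (v j - w j) := by
  simp only [aCoef, mul_sub, sum_sub_distrib]
  ring

theorem lnStep_sub_lnStep (h : ℝ) (v w : Fin N → ℝ) (i : Fin N) :
    lnStep M Q u0 h v i - lnStep M Q u0 h w i
      = (aCoef M Q v i - aCoef M Q w i) * (slopeWeight (M i i) h / h) := by
  simp only [lnStep, sCoef, slopeWeight, div_eq_mul_inv]
  ring

theorem lnStep_self (h : ℝ) : lnStep M Q u0 h u0 = cnStep M Q u0 h u0 := by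
  funext i
  simp only [lnStep, cnStep, sCoef, sub_self, div_eq_mul_inv, inv_neg]
  ring

theorem LN_eq_iterate {k : ℕ} (hk : 1 ≤ k) (h : ℝ) :
    LN M Q u0 k h = (lnStep M Q u0 h)^[k] u0 := by
  obtain ⟨n, rfl⟩ := Nat.exists_eq_add_of_le' hk
  rw [LN, Nat.add_sub_cancel, Function.iterate_succ_apply, lnStep_self]

theorem cnStep_sub_isBigO (i : Fin N) :
    (fun h => cnStep M Q u0 h u0 i - u0 i) =O[𝓝 0] (· ^ 1) := by
  have hexp := Real.exp_mul_sub_sum_range_isBigO_pow (M i i) 1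
  simp only [range_one, sum_singleton, pow_zero, factorial_zero, cast_one, div_one] at hexp
  simpa only [cnStep] using (hexp.const_mul_left (u0 i - aCoef M Q u0 i / -M i i)).congr_left
    fun h => by ring

theorem lnStep_sub_isBigO {v w : ℝ → Fin N → ℝ} {n : ℕ}
    (hvw : ∀ j, (fun h => v h j - w h j) =O[𝓝 0] (· ^ n)) (i : Fin N) :
    (fun h => lnStep M Q u0 h (v h) i - lnStep M Q u0 h (w h) i) =O[𝓝 0] (· ^ (n + 1)) := by
  simp only [lnStep_sub_lnStep, aCoef_sub_aCoef, pow_succ]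
  exact (IsBigO.fun_sum fun j _ => (hvw j).const_mul_left (M i j)).mul
    (slopeWeight_div_isBigO (M i i))

theorem lnStep_iterate_succ_sub_isBigO (n : ℕ) (i : Fin N) :
    (fun h => (lnStep M Q u0 h)^[n + 1] u0 i - (lnStep M Q u0 h)^[n] u0 i)
      =O[𝓝 0] (· ^ (n + 1)) := by
  induction n generalizing i with
  | zero => simpa only [zero_add, Function.iterate_one, Function.iterate_zero_apply, lnStep_self]
      using cnStep_sub_isBigO M Q u0 i
  | succ n ih => simpa only [Function.iterate_succ_apply'] using lnStep_sub_isBigO M Q u0 ih i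

end LinearNeighbour

theorem ln_iteration_difference_third_order_general {N : ℕ}
    (M : Matrix (Fin N) (Fin N) ℝ) (Q u0 : Fin N → ℝ)
    (k : ℕ) (hk : 2 ≤ k) (i : Fin N) :
    (fun h : ℝ => LN M Q u0 (k + 1) h i - LN M Q u0 k h i)
      =O[nhdsWithin 0 (Set.Ioi 0)] fun h : ℝ => h ^ 3 := by
  simp only [LN_eq_iterate M Q u0 (by omega : 1 ≤ k + 1), LN_eq_iterate M Q u0 (by omega : 1 ≤ k)]
  exact ((lnStep_iterate_succ_sub_isBigO M Q u0 k i).trans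
    (Asymptotics.isBigO_pow_pow_of_le (by omega))).mono nhdsWithin_le_nhds

/-- Appendix A, point D: each additional linear-neighbour iteration modifies only
terms of order at least three: `LN_{k+1}(h) − LN_k(h) = O(h³)` as `h → 0⁺`. -/
theorem ln_iteration_difference_third_order {N : ℕ} (hN : 1 ≤ N)
    (M : Matrix (Fin N) (Fin N) ℝ) (hM : ∀ i, M i i < 0) (Q u0 : Fin N → ℝ)
    (k : ℕ) (hk : 2 ≤ k) (i : Fin N) :
    (fun h : ℝ => LN M Q u0 (k + 1) h i - LN M Q u0 k h i)
      =O[nhdsWithin 0 (Set.Ioi 0)] fun h : ℝ => h ^ 3 :=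
  ln_iteration_difference_third_order_general M Q u0 k hk i
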